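/- arXiv:0710.5415 — 2 statements merged into one kernel-verified Lean document; each statement's English description precedes it below -/
import Mathlib

section
/- Let 𝒪 ⊆ ℕ² be a finite nonempty order ideal. Then the formal power series Ind_𝒪(y_1, y_2) = Σ_{α ∈ ℕ²} ind_𝒪(α) y_1^{α_1} y_2^{α_2} ∈ ℚ[[y_1, y_2]], multiplied by (1 − y_1)²(1 − y_2)², is a polynomial; i.e. Ind_𝒪 is a rational function with denominator dividing (1 − y_1)²(1 − y_2)². -/
/-- An order ideal in ℕ^n: a set of exponent vectors closed under componentwise division. -/
def IsOrderIdeal {n : ℕ} (O : Set (Fin n →₀ ℕ)) : Prop :=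
  ∀ α ∈ O, ∀ β : Fin n →₀ ℕ, β ≤ α → β ∈ O

/-- The border of a set `C ⊆ ℕ^n`: `∂C = {α + e_i : α ∈ C, i} \ C`. -/
def border {n : ℕ} (C : Set (Fin n →₀ ℕ)) : Set (Fin n →₀ ℕ) :=
  {γ | ∃ α ∈ C, ∃ i : Fin n, γ = α + Finsupp.single i 1} \ C

/-- The closed higher borders: `∂̄⁰O = O`, `∂̄ᵏO = ∂(∂̄ᵏ⁻¹O) ∪ ∂̄ᵏ⁻¹O`. -/
def closedBorder {n : ℕ} (O : Set (Fin n →₀ ℕ)) : ℕ → Set (Fin n →₀ ℕ)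
  | 0 => O
  | k + 1 => border (closedBorder O k) ∪ closedBorder O k

/-- The higher borders: `∂⁰O = O`, `∂ᵏO = ∂(∂̄ᵏ⁻¹O)`. -/
def borderIter {n : ℕ} (O : Set (Fin n →₀ ℕ)) : ℕ → Set (Fin n →₀ ℕ)
  | 0 => O
  | k + 1 => border (closedBorder O k)

/-- The index of `α` relative to `O`: the minimal `k` with `α ∈ ∂̄ᵏO`. -/
noncomputable def ind {n : ℕ} (O : Set (Fin n →₀ ℕ)) (α : Fin n →₀ ℕ) : ℕ :=
  sInf {k | α ∈ closedBorder O k}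

/-- Total degree of an exponent vector. -/
def deg {n : ℕ} (α : Fin n →₀ ℕ) : ℕ := ∑ i, α i

/-- The multivariate formal power series with prescribed coefficients. -/
noncomputable def seriesOfCoeff {n : ℕ} (f : (Fin n →₀ ℕ) → ℚ) : MvPowerSeries (Fin n) ℚ := f

/-!
Unwinding the closed borders, `α ∈ ∂̄ᵏ𝒪` iff `α = β + d` with `β ∈ 𝒪` and `|d| ≤ k`, so the
index of `α` is its ℓ¹-distance to the part of `𝒪` below it. Once `αᵢ` is at least every `βᵢ`
with `β ∈ 𝒪`, a step in direction `i` therefore raises the index by exactly one, and the second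
difference `(1 - yᵢ)²` annihilates the series there. Multiplying by the other factors `(1 - yⱼ)²`
keeps these coefficients zero, so the product is supported in a finite box.
-/

open MvPowerSeries

theorem Finsupp.exists_eq_add_single_one_of_ne_zero {σ : Type*} {d : σ →₀ ℕ} (hd : d ≠ 0) :
    ∃ d' i, d = d' + Finsupp.single i 1 := by
  obtain ⟨i, hi⟩ := Finsupp.ne_iff.mp hd
  refine ⟨d - Finsupp.single i 1, i, (tsub_add_cancel_of_le ?_).symm⟩
  simpa [Finsupp.single_le_iff, Nat.one_le_iff_ne_zero] using hi

theorem Nat.sInf_setOf_eq_succ {p q : ℕ → Prop} (hq : ∃ k, q k) (hp0 : ¬p 0)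
    (hpq : ∀ k, p (k + 1) ↔ q k) : sInf {k | p k} = sInf {k | q k} + 1 := by
  classical
  obtain ⟨k, hk⟩ := hq
  have hp : ∃ k, p k := ⟨k + 1, (hpq k).2 hk⟩
  rw [Nat.sInf_def (s := {k | p k}) hp, Nat.sInf_def (s := {k | q k}) ⟨k, hk⟩,
    Nat.find_comp_succ hp ⟨k, (hpq k).2 hk⟩ hp0]
  exact congrArg (· + 1) (Nat.find_congr' (hpq _))

section ClosedBorder

variable {n : ℕ} {O : Set (Fin n →₀ ℕ)} {k : ℕ} {α : Fin n →₀ ℕ}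

theorem mem_closedBorder_succ :
    α ∈ closedBorder O (k + 1) ↔
      α ∈ closedBorder O k ∨ ∃ β ∈ closedBorder O k, ∃ i, α = β + Finsupp.single i 1 := by
  simp only [closedBorder, border, Set.mem_union, Set.mem_sdiff, Set.mem_ofPred_eq]
  by_cases hα : α ∈ closedBorder O k <;> simp [hα]

theorem mem_closedBorder_iff :
    α ∈ closedBorder O k ↔ ∃ β ∈ O, ∃ d : Fin n →₀ ℕ, α = β + d ∧ d.degree ≤ k := by
  induction k generalizing α with
  | zero => simp [closedBorder, Finsupp.degree_eq_zero_iff]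
  | succ k ih =>
    simp only [mem_closedBorder_succ, ih]
    constructor
    · rintro (⟨β, hβ, d, rfl, hd⟩ | ⟨_, ⟨β, hβ, d, rfl, hd⟩, i, rfl⟩)
      · exact ⟨β, hβ, d, rfl, by omega⟩
      · exact ⟨β, hβ, d + Finsupp.single i 1, add_assoc _ _ _, by simpa using hd⟩
    · rintro ⟨β, hβ, d, rfl, hd⟩
      by_cases hdk : d.degree ≤ k
      · exact Or.inl ⟨β, hβ, d, rfl, hdk⟩
      obtain ⟨d', i, rfl⟩ := Finsupp.exists_eq_add_single_one_of_ne_zero (d := d)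
        (by rintro rfl; simp at hdk)
      refine Or.inr ⟨β + d', ⟨β, hβ, d', rfl, ?_⟩, i, (add_assoc _ _ _).symm⟩
      simp only [map_add, Finsupp.degree_single] at hd
      omega

theorem mem_closedBorder_degree (h0 : 0 ∈ O) (α : Fin n →₀ ℕ) : α ∈ closedBorder O α.degree :=
  mem_closedBorder_iff.2 ⟨0, h0, α, (zero_add α).symm, le_rfl⟩

variable {i : Fin n} {N : ℕ}

theorem add_single_mem_closedBorder_succ_iff (hN : ∀ β ∈ O, β i ≤ N) (hα : N ≤ α i) :
    α + Finsupp.single i 1 ∈ closedBorder O (k + 1) ↔ α ∈ closedBorder O k := by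
  simp only [mem_closedBorder_iff]
  constructor
  · rintro ⟨β, hβ, d, hαd, hd⟩
    have hdi : Finsupp.single i 1 ≤ d := by
      have hαdi := congrArg (· i) hαd
      have hβi := hN β hβ
      simp only [Finsupp.coe_add, Pi.add_apply, Finsupp.single_eq_same] at hαdi
      rw [Finsupp.single_le_iff]
      omega
    obtain ⟨d', rfl⟩ := exists_add_of_le hdi
    refine ⟨β, hβ, d', add_right_cancel (b := Finsupp.single i 1) ?_, ?_⟩
    · rw [hαd]; abel
    · simp only [map_add, Finsupp.degree_single] at hd
      omega
  · rintro ⟨β, hβ, d, rfl, hd⟩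
    exact ⟨β, hβ, d + Finsupp.single i 1, add_assoc _ _ _, by simpa using hd⟩

theorem ind_add_single (h0 : 0 ∈ O) (hN : ∀ β ∈ O, β i ≤ N) (hα : N ≤ α i) :
    ind O (α + Finsupp.single i 1) = ind O α + 1 := by
  refine Nat.sInf_setOf_eq_succ ⟨_, mem_closedBorder_degree h0 α⟩ (fun hO => ?_)
    (fun _ => add_single_mem_closedBorder_succ_iff hN hα)
  have := hN _ hO
  simp only [Finsupp.coe_add, Pi.add_apply, Finsupp.single_eq_same] at this
  omega

end ClosedBorder

section PowerSeries

variable {σ R : Type*} [CommRing R]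

theorem MvPowerSeries.coeff_one_sub_X_mul {i : σ} {m : σ →₀ ℕ} (hm : m i ≠ 0)
    (F : MvPowerSeries σ R) :
    coeff m ((1 - X i) * F) = coeff m F - coeff (m - Finsupp.single i 1) F := by
  obtain ⟨m, rfl⟩ : ∃ m', m = Finsupp.single i 1 + m' :=
    exists_add_of_le (Finsupp.single_le_iff.2 (Nat.one_le_iff_ne_zero.2 hm))
  rw [sub_mul, one_mul, map_sub, X_def, coeff_add_monomial_mul, one_mul, add_tsub_cancel_left]

variable {i : σ} {M : ℕ} {K : MvPowerSeries σ R}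

theorem MvPowerSeries.coeff_X_mul_eq_zero {j : σ} (hij : j ≠ i)
    (hK : ∀ m : σ →₀ ℕ, M ≤ m i → coeff m K = 0) {m : σ →₀ ℕ} (hm : M ≤ m i) :
    coeff m (X j * K) = 0 := by
  classical
  rw [X_def, coeff_monomial_mul]
  split_ifs
  · rw [hK _ (by simpa [Finsupp.single_apply, hij] using hm), mul_zero]
  · rfl

theorem MvPowerSeries.coeff_one_sub_X_pow_mul_eq_zero {j : σ} (hij : j ≠ i) (k : ℕ)
    (hK : ∀ m : σ →₀ ℕ, M ≤ m i → coeff m K = 0) {m : σ →₀ ℕ} (hm : M ≤ m i) :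
    coeff m ((1 - X j) ^ k * K) = 0 := by
  induction k generalizing m with
  | zero => simpa using hK m hm
  | succ k ih =>
    rw [pow_succ', mul_assoc, sub_mul, one_mul, map_sub, ih hm,
      coeff_X_mul_eq_zero hij (fun _ => ih) hm, sub_zero]

theorem MvPowerSeries.coeff_prod_one_sub_X_pow_mul_eq_zero {s : Finset σ} (hi : i ∉ s) (k : ℕ)
    (hK : ∀ m : σ →₀ ℕ, M ≤ m i → coeff m K = 0) {m : σ →₀ ℕ} (hm : M ≤ m i) :
    coeff m ((∏ j ∈ s, (1 - X j) ^ k) * K) = 0 := by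
  classical
  induction s using Finset.induction_on generalizing m with
  | empty => simpa using hK m hm
  | insert j s hjs ih =>
    rw [Finset.mem_insert, not_or] at hi
    rw [Finset.prod_insert hjs, mul_assoc]
    exact coeff_one_sub_X_pow_mul_eq_zero (Ne.symm hi.1) k (fun _ hm' => ih hi.2 hm') hm

theorem MvPowerSeries.coe_trunc'_eq_self [DecidableEq σ] {n : σ →₀ ℕ} {φ : MvPowerSeries σ R}
    (hφ : ∀ m, ¬m ≤ n → coeff m φ = 0) : (trunc' R n φ : MvPowerSeries σ R) = φ := by
  ext m
  rw [MvPolynomial.coeff_coe, coeff_trunc']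
  split_ifs with hm
  · rfl
  · exact (hφ m hm).symm

end PowerSeries

section IndexSeries

variable {n : ℕ} {O : Set (Fin n →₀ ℕ)} {i : Fin n} {N : ℕ} {m : Fin n →₀ ℕ}

theorem coeff_one_sub_X_mul_ind (h0 : 0 ∈ O) (hN : ∀ β ∈ O, β i ≤ N) (hm : N + 1 ≤ m i) :
    coeff m ((1 - X i) * seriesOfCoeff fun α => (ind O α : ℚ)) = 1 := by
  have hmi : Finsupp.single i 1 ≤ m := Finsupp.single_le_iff.2 (by omega)
  have hind := ind_add_single h0 hN (α := m - Finsupp.single i 1)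
    (by rw [Finsupp.tsub_apply, Finsupp.single_eq_same]; omega)
  rw [tsub_add_cancel_of_le hmi] at hind
  rw [coeff_one_sub_X_mul (by omega)]
  change (ind O m : ℚ) - ind O (m - Finsupp.single i 1) = 1
  rw [hind, Nat.cast_succ, add_sub_cancel_left]

theorem coeff_one_sub_X_sq_mul_ind (h0 : 0 ∈ O) (hN : ∀ β ∈ O, β i ≤ N) (hm : N + 2 ≤ m i) :
    coeff m ((1 - X i) ^ 2 * seriesOfCoeff fun α => (ind O α : ℚ)) = 0 := by
  have hm' : N + 1 ≤ (m - Finsupp.single i 1 : Fin n →₀ ℕ) i := by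
    rw [Finsupp.tsub_apply, Finsupp.single_eq_same]; omega
  rw [sq, mul_assoc, coeff_one_sub_X_mul (by omega), coeff_one_sub_X_mul_ind h0 hN (by omega),
    coeff_one_sub_X_mul_ind h0 hN hm', sub_self]

theorem coeff_prod_one_sub_X_sq_mul_ind (h0 : 0 ∈ O) (hN : ∀ β ∈ O, β i ≤ N)
    (hm : N + 2 ≤ m i) :
    coeff m ((∏ j, (1 - X j) ^ 2) * seriesOfCoeff fun α => (ind O α : ℚ)) = 0 := by
  rw [← Finset.prod_erase_mul _ _ (Finset.mem_univ i), mul_assoc]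
  exact coeff_prod_one_sub_X_pow_mul_eq_zero (Finset.notMem_erase i _) 2
    (fun _ => coeff_one_sub_X_sq_mul_ind h0 hN) hm

theorem exists_prod_one_sub_X_sq_mul_ind_eq_coe (hfin : O.Finite) (h0 : 0 ∈ O) :
    ∃ p : MvPolynomial (Fin n) ℚ,
      (∏ j, (1 - X j) ^ 2) * seriesOfCoeff (fun α => (ind O α : ℚ)) = p := by
  obtain ⟨u, hu⟩ := hfin.bddAbove
  refine ⟨trunc' ℚ (Finsupp.equivFunOnFinite.symm fun _ => u.degree + 1) _,
    (coe_trunc'_eq_self fun m hm => ?_).symm⟩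
  obtain ⟨i, hi⟩ : ∃ i, u.degree + 1 < m i := by simpa [Finsupp.le_def] using hm
  exact coeff_prod_one_sub_X_sq_mul_ind h0
    (fun β hβ => (Finsupp.le_def.1 (hu hβ) i).trans (u.le_degree i)) hi

end IndexSeries

/-- For a finite nonempty order ideal `O ⊆ ℕ²`, the generating function
`Ind_O(y₁,y₂) = Σ_α ind_O(α) y^α`, multiplied by `(1-y₁)²(1-y₂)²`, is a polynomial. -/
theorem ind_genFun_dim2_rational (O : Set (Fin 2 →₀ ℕ))
    (hfin : O.Finite) (hne : O.Nonempty) (hO : IsOrderIdeal O) :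
    ∃ p : MvPolynomial (Fin 2) ℚ,
      ((1 : MvPowerSeries (Fin 2) ℚ) - MvPowerSeries.X 0) ^ 2 * (1 - MvPowerSeries.X 1) ^ 2 *
        seriesOfCoeff (fun α => (ind O α : ℚ)) = (p : MvPowerSeries (Fin 2) ℚ) := by
  obtain ⟨γ, hγ⟩ := hne
  obtain ⟨p, hp⟩ := exists_prod_one_sub_X_sq_mul_ind_eq_coe hfin (hO γ hγ 0 zero_le)
  exact ⟨p, by rwa [Fin.prod_univ_two] at hp⟩
end

section
/- Let n ≥ 1 and let b be a rational number. Then in the ring ℚ[[x_1, …, x_n]] of multivariate formal power series, ∏_{i=1}^n (1 − x_i)² · Σ_{α ∈ ℕ^n} (|α| + b) x^α = Σ_{A ⊆ [n]} (−1)^{|A|} (b − |A|) ∏_{j ∈ A} x_j, where |α| = α_1 + ⋯ + α_n and |A| is the cardinality of A. -/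
/-!
With `P = ∏ᵢ (1 - xᵢ)` and `G = ∑_α x^α` we have `P * G = 1` and `(1 - xᵢ) * ∑_α αᵢ x^α = xᵢ * G`,
so the left-hand side equals `b * P + ∑ᵢ xᵢ ∏_{j ≠ i} (1 - xⱼ)`. Expanding the products, the squarefree
monomial `x^A` receives `b (-1)^|A|` from the first term and `(-1)^(|A| - 1)` from each `i ∈ A`.
-/

open Finset

theorem Finset.sum_powerset_neg_one_pow_card_mul_sub_card_mul_prod {ι R : Type*} [CommRing R]
    [DecidableEq ι] (x : ι → R) (s : Finset ι) (b : R) :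
    ∑ A ∈ s.powerset, (-1) ^ #A * (b - #A) * ∏ j ∈ A, x j =
      b * ∏ i ∈ s, (1 - x i) + ∑ i ∈ s, x i * ∏ j ∈ s.erase i, (1 - x j) := by
  induction s using Finset.induction generalizing b with
  | empty => simp
  | insert a s ha ih =>
    have h_insert : ∑ A ∈ s.powerset, (-1) ^ #(insert a A) * (b - #(insert a A)) *
        ∏ j ∈ insert a A, x j =
        -x a * ∑ A ∈ s.powerset, (-1) ^ #A * ((b - 1) - #A) * ∏ j ∈ A, x j := by
      rw [mul_sum]
      refine sum_congr rfl fun A hA => ?_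
      have haA : a ∉ A := fun h => ha (mem_powerset.mp hA h)
      rw [card_insert_of_notMem haA, prod_insert haA]
      push_cast
      ring
    have h_erase : ∑ i ∈ s, x i * ∏ j ∈ (insert a s).erase i, (1 - x j) =
        (1 - x a) * ∑ i ∈ s, x i * ∏ j ∈ s.erase i, (1 - x j) := by
      rw [mul_sum]
      refine sum_congr rfl fun i hi => ?_
      have hia : a ≠ i := fun h => ha (h ▸ hi)
      rw [erase_insert_of_ne hia, prod_insert fun h => ha (mem_of_mem_erase h)]
      ring
    rw [sum_powerset_insert ha, h_insert, ih, ih, prod_insert ha, sum_insert ha, erase_insert ha,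
      h_erase]
    ring

namespace MvPowerSeries

variable {σ R : Type*} [CommRing R]

theorem coeff_X_mul' (m : σ →₀ ℕ) (i : σ) (φ : MvPowerSeries σ R) :
    coeff m (X i * φ) = if m i = 0 then 0 else coeff (m - Finsupp.single i 1) φ := by
  simp only [X, coeff_monomial_mul, Finsupp.single_le_iff, one_mul]
  split_ifs <;> first | rfl | omega

theorem coeff_one_sub_X_mul_s8 (m : σ →₀ ℕ) (i : σ) (φ : MvPowerSeries σ R) :
    coeff m ((1 - X i) * φ) =
      coeff m φ - if m i = 0 then 0 else coeff (m - Finsupp.single i 1) φ := by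
  rw [sub_mul, one_mul, map_sub, coeff_X_mul']

theorem coeff_prod_one_sub_X_mul_of_coeff_eq_one [DecidableEq σ] {φ : MvPowerSeries σ R}
    (hφ : ∀ m, coeff m φ = 1) (s : Finset σ) (m : σ →₀ ℕ) :
    coeff m ((∏ i ∈ s, (1 - X i)) * φ) = if ∀ i ∈ s, m i = 0 then 1 else 0 := by
  induction s using Finset.induction generalizing m with
  | empty => simp [hφ]
  | insert a s ha ih =>
    have h_shift : (∀ i ∈ s, (m - Finsupp.single a 1 : σ →₀ ℕ) i = 0) ↔ ∀ i ∈ s, m i = 0 := by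
      refine forall₂_congr fun i hi => ?_
      rw [Finsupp.tsub_apply, Finsupp.single_eq_of_ne (ne_of_mem_of_not_mem hi ha), tsub_zero]
    rw [prod_insert ha, mul_assoc, coeff_one_sub_X_mul_s8, ih, ih]
    simp only [h_shift]
    by_cases hma : m a = 0 <;> simp [hma]

theorem prod_one_sub_X_mul_of_coeff_eq_one [Fintype σ] {φ : MvPowerSeries σ R}
    (hφ : ∀ m, coeff m φ = 1) : (∏ i, (1 - X i)) * φ = 1 := by
  classical
  ext m
  rw [coeff_prod_one_sub_X_mul_of_coeff_eq_one hφ, coeff_one]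
  simp [Finsupp.ext_iff]

theorem one_sub_X_mul_of_coeff_eq_apply {φ ψ : MvPowerSeries σ R}
    (hφ : ∀ m, coeff m φ = 1) (i : σ) (hψ : ∀ m, coeff m ψ = m i) :
    (1 - X i) * ψ = X i * φ := by
  ext m
  rw [coeff_one_sub_X_mul_s8, coeff_X_mul', hφ, hψ, hψ]
  split_ifs with h
  · simp [h]
  · rw [Finsupp.tsub_apply, Finsupp.single_eq_same, Nat.cast_sub (Nat.one_le_iff_ne_zero.mpr h)]
    ring

end MvPowerSeries

open MvPowerSeries

theorem coeff_seriesOfCoeff {n : ℕ} (f : (Fin n →₀ ℕ) → ℚ) (m : Fin n →₀ ℕ) :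
    coeff m (seriesOfCoeff f) = f m := rfl

theorem seriesOfCoeff_deg_add {n : ℕ} (b : ℚ) :
    seriesOfCoeff (fun α : Fin n →₀ ℕ => (deg α : ℚ) + b) =
      ∑ i, seriesOfCoeff (fun m => (m i : ℚ)) + C b * seriesOfCoeff (fun _ => 1) := by
  ext m
  simp [coeff_seriesOfCoeff, deg]

theorem prod_one_sub_X_sq_mul_seriesOfCoeff_deg_add {n : ℕ} (b : ℚ) :
    (∏ i : Fin n, (1 - X i) ^ 2) * seriesOfCoeff (fun α => (deg α : ℚ) + b) =
      C b * ∏ i, (1 - X i) + ∑ i, X i * ∏ j ∈ univ.erase i, (1 - X j) := by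
  have h_geom := prod_one_sub_X_mul_of_coeff_eq_one (coeff_seriesOfCoeff (n := n) (fun _ => 1))
  rw [prod_pow, seriesOfCoeff_deg_add, mul_add, mul_sum, add_comm]
  congr 1
  · linear_combination (C b * ∏ i : Fin n, (1 - X i)) * h_geom
  · refine sum_congr rfl fun i _ => ?_
    have h_coord := one_sub_X_mul_of_coeff_eq_apply (coeff_seriesOfCoeff (fun _ => 1)) i
      (coeff_seriesOfCoeff (fun m => (m i : ℚ)))
    rw [← mul_prod_erase univ _ (mem_univ i)] at h_geom ⊢
    linear_combination ((1 - X i) * (∏ j ∈ univ.erase i, (1 - X j)) ^ 2) * h_coord +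
      (X i * ∏ j ∈ univ.erase i, (1 - X j)) * h_geom

theorem genFun_deg_general (n : ℕ) (b : ℚ) :
    (∏ i : Fin n, (1 - MvPowerSeries.X i) ^ 2) *
      seriesOfCoeff (fun α => (deg α : ℚ) + b) =
    ∑ A : Finset (Fin n),
      MvPowerSeries.C (σ := Fin n) (R := ℚ) ((-1 : ℚ) ^ A.card * (b - A.card)) *
        ∏ j ∈ A, MvPowerSeries.X j := by
  simp only [map_mul, map_pow, map_neg, map_one, map_sub, map_natCast]
  rw [prod_one_sub_X_sq_mul_seriesOfCoeff_deg_add, ← powerset_univ,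
    sum_powerset_neg_one_pow_card_mul_sub_card_mul_prod]

/-- In `ℚ[[x₁,…,xₙ]]`:
`∏ᵢ (1-xᵢ)² · Σ_α (|α| + b) x^α = Σ_{A ⊆ [n]} (-1)^{|A|} (b - |A|) ∏_{j∈A} xⱼ`. -/
theorem genFun_deg (n : ℕ) (hn : 1 ≤ n) (b : ℚ) :
    (∏ i : Fin n, (1 - MvPowerSeries.X i) ^ 2) *
      seriesOfCoeff (fun α => (deg α : ℚ) + b) =
    ∑ A : Finset (Fin n),
      MvPowerSeries.C (σ := Fin n) (R := ℚ) ((-1 : ℚ) ^ A.card * (b - A.card)) *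
        ∏ j ∈ A, MvPowerSeries.X j :=
  genFun_deg_general n b
end
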